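/- Let n ≥ 1 and 0 ≤ i ≤ j ≤ n be integers, and let L_i(j) denote the coefficient of x^{j−i} in the polynomial q_j(x). If i is odd, then L_i(j) = 0. If i is even, then L_i(j) = ((−1)^{i/2}/j!) · Σ_{I ∈ 𝓘(i/2, j)} ∏_{u ∈ I} (n−u)(u+1), where 𝓘(k, j) denotes the collection of all k-element subsets I of {0, 1, …, j−2} such that any two distinct elements of I differ by at least 2, and the empty product equals 1. -/

import Mathlib

/-!
Rescaling `p j = j! • q j` turns the recursion into the monic one
`p (j + 2) = X * p (j + 1) - w j • p j` with `w u = (n - u) (u + 1)`. This is the recursion of the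
matching polynomial of the path `0 — 1 — ⋯ — (j - 1)` whose edge `{u, u + 1}` has weight `w u`:
splitting off the last edge shows `p j = ∑ₘ (-1)^|M| (∏_{u ∈ M} w u) X^(j - 2|M|)` over the
matchings `M`, i.e. the sets of pairwise non-adjacent edges. So `X^(j - i)` only collects matchings
with `2|M| = i`.
-/

open Finset Polynomial Nat

/-- Sets of pairwise non-adjacent edges of the path `0 — 1 — ⋯ — m`, the edge `{u, u + 1}` being
recorded as `u`. -/
def pathMatchings (m : ℕ) : Finset (Finset ℕ) :=
  (range m).powerset.filter fun I => ∀ u ∈ I, ∀ v ∈ I, u < v → u + 2 ≤ v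

theorem mem_pathMatchings {m : ℕ} {I : Finset ℕ} :
    I ∈ pathMatchings m ↔ (∀ u ∈ I, u < m) ∧ ∀ u ∈ I, ∀ v ∈ I, u < v → u + 2 ≤ v := by
  simp [pathMatchings, subset_iff]

theorem pathMatchings_zero : pathMatchings 0 = {∅} := rfl

theorem card_le_of_mem_pathMatchings {m : ℕ} {I : Finset ℕ} (hI : I ∈ pathMatchings m) :
    #I ≤ (m + 1) / 2 := by
  rw [mem_pathMatchings] at hI
  calc #I ≤ #(range ((m + 1) / 2)) := by
        refine card_le_card_of_injOn (· / 2) (fun u hu => ?_) fun u hu v hv huv => ?_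
        · have := hI.1 u hu
          simp only [coe_range, Set.mem_Iio]
          omega
        · simp only at huv
          rcases lt_trichotomy u v with h | rfl | h
          · have := hI.2 u hu v hv h; omega
          · rfl
          · have := hI.2 v hv u hu h; omega
    _ = (m + 1) / 2 := card_range _

theorem filter_notMem_pathMatchings_succ (m : ℕ) :
    (pathMatchings (m + 1)).filter (m ∉ ·) = pathMatchings m := by
  ext I
  simp only [mem_filter, mem_pathMatchings]
  constructor
  · rintro ⟨⟨hlt, hgap⟩, hm⟩
    refine ⟨fun u hu => ?_, hgap⟩
    have := hlt u hu
    have : u ≠ m := ne_of_mem_of_not_mem hu hm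
    omega
  · rintro ⟨hlt, hgap⟩
    exact ⟨⟨fun u hu => (hlt u hu).trans m.lt_succ_self, hgap⟩, fun hm => (hlt m hm).false⟩

theorem filter_mem_pathMatchings_succ (m : ℕ) :
    (pathMatchings (m + 1)).filter (m ∈ ·) = (pathMatchings (m - 1)).image (insert m) := by
  ext I
  simp only [mem_filter, mem_image, mem_pathMatchings]
  constructor
  · rintro ⟨⟨hlt, hgap⟩, hm⟩
    refine ⟨I.erase m, ⟨fun u hu => ?_, fun u hu v hv =>
      hgap u (mem_of_mem_erase hu) v (mem_of_mem_erase hv)⟩, insert_erase hm⟩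
    have := hlt u (mem_of_mem_erase hu)
    have := hgap u (mem_of_mem_erase hu) m hm (by have := ne_of_mem_erase hu; omega)
    omega
  · rintro ⟨J, ⟨hlt, hgap⟩, rfl⟩
    refine ⟨⟨fun u hu => ?_, fun u hu v hv huv => ?_⟩, mem_insert_self m J⟩
    · rcases mem_insert.1 hu with rfl | hu
      · omega
      · have := hlt u hu; omega
    · rcases mem_insert.1 hu with rfl | huJ <;> rcases mem_insert.1 hv with rfl | hvJ
      · omega
      · have := hlt v hvJ; omega
      · have := hlt u huJ; omega
      · exact hgap u huJ v hvJ huv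

theorem notMem_of_mem_pathMatchings_sub_one {m : ℕ} {I : Finset ℕ}
    (hI : I ∈ pathMatchings (m - 1)) : m ∉ I :=
  fun hm => by have := (mem_pathMatchings.1 hI).1 m hm; omega

theorem sum_pathMatchings_succ {M : Type*} [AddCommMonoid M] (m : ℕ) (f : Finset ℕ → M) :
    ∑ I ∈ pathMatchings (m + 1), f I =
      ∑ I ∈ pathMatchings m, f I + ∑ I ∈ pathMatchings (m - 1), f (insert m I) := by
  rw [← sum_filter_not_add_sum_filter _ (m ∈ ·), filter_notMem_pathMatchings_succ,
    filter_mem_pathMatchings_succ, sum_image]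
  intro I hI J hJ h
  rw [← erase_insert (notMem_of_mem_pathMatchings_sub_one hI),
    ← erase_insert (notMem_of_mem_pathMatchings_sub_one hJ), h]

variable {R : Type*} [CommRing R]

/-- The matching polynomial of the path `0 — 1 — ⋯ — (j - 1)` with weight `w u` on the edge
`{u, u + 1}`, defined through the recursion obtained by deleting the last vertex. -/
noncomputable def pathMatchingPoly (w : ℕ → R) : ℕ → R[X]
  | 0 => 1
  | 1 => X
  | j + 2 => X * pathMatchingPoly w (j + 1) - C (w j) * pathMatchingPoly w j

theorem pathMatchingPoly_eq_sum (w : ℕ → R) : ∀ j : ℕ, pathMatchingPoly w j =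
    ∑ I ∈ pathMatchings (j - 1), C ((-1) ^ #I * ∏ u ∈ I, w u) * X ^ (j - 2 * #I)
  | 0 => by simp [pathMatchingPoly, pathMatchings_zero]
  | 1 => by simp [pathMatchingPoly, pathMatchings_zero]
  | j + 2 => by
    have hfirst : ∀ I ∈ pathMatchings j,
        C ((-1) ^ #I * ∏ u ∈ I, w u) * X ^ (j + 2 - 2 * #I) =
        X * (C ((-1) ^ #I * ∏ u ∈ I, w u) * X ^ (j + 1 - 2 * #I)) := by
      intro I hI
      have := card_le_of_mem_pathMatchings hI
      rw [show j + 2 - 2 * #I = j + 1 - 2 * #I + 1 by omega, pow_succ]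
      ring
    have hsecond : ∀ I ∈ pathMatchings (j - 1),
        C ((-1) ^ #(insert j I) * ∏ u ∈ insert j I, w u) * X ^ (j + 2 - 2 * #(insert j I)) =
          -C (w j) * (C ((-1) ^ #I * ∏ u ∈ I, w u) * X ^ (j - 2 * #I)) := by
      intro I hI
      have hj := notMem_of_mem_pathMatchings_sub_one hI
      rw [card_insert_of_notMem hj, prod_insert hj,
        show j + 2 - 2 * (#I + 1) = j - 2 * #I by omega, pow_succ]
      simp only [map_mul, map_neg, map_one]
      ring
    rw [pathMatchingPoly, pathMatchingPoly_eq_sum w (j + 1), pathMatchingPoly_eq_sum w j,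
      show j + 2 - 1 = j + 1 by rfl, sum_pathMatchings_succ, sum_congr rfl hfirst,
      sum_congr rfl hsecond, ← mul_sum, ← mul_sum, Nat.add_sub_cancel]
    ring

theorem coeff_pathMatchingPoly_sub (w : ℕ → R) {i j : ℕ} (hij : i ≤ j) :
    (pathMatchingPoly w j).coeff (j - i) =
      ∑ I ∈ pathMatchings (j - 1) with 2 * #I = i, (-1) ^ #I * ∏ u ∈ I, w u := by
  rw [pathMatchingPoly_eq_sum, finsetSum_coeff, sum_filter]
  refine sum_congr rfl fun I hI => ?_
  have := card_le_of_mem_pathMatchings hI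
  rw [coeff_C_mul_X_pow]
  exact if_congr (by omega) rfl rfl

theorem coeff_pathMatchingPoly_sub_of_odd (w : ℕ → R) {i j : ℕ} (hij : i ≤ j) (hi : Odd i) :
    (pathMatchingPoly w j).coeff (j - i) = 0 := by
  rw [coeff_pathMatchingPoly_sub w hij, sum_eq_zero]
  intro I hI
  rw [mem_filter] at hI
  exact absurd ⟨#I, by omega⟩ (Nat.not_even_iff_odd.2 hi)

theorem coeff_pathMatchingPoly_sub_two_mul (w : ℕ → R) {k j : ℕ} (hkj : 2 * k ≤ j) :
    (pathMatchingPoly w j).coeff (j - 2 * k) =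
      (-1) ^ k * ∑ I ∈ pathMatchings (j - 1) with #I = k, ∏ u ∈ I, w u := by
  rw [coeff_pathMatchingPoly_sub w hkj, mul_sum]
  exact sum_congr (filter_congr fun I _ => by omega) fun I hI => by rw [(mem_filter.1 hI).2]

theorem factorial_mul_eq_pathMatchingPoly (n : ℕ) (q : ℕ → ℚ[X])
    (hq0 : q 0 = 1) (hq1 : q 1 = X)
    (hrec : ∀ j : ℕ, 1 ≤ j → j ≤ n - 1 →
      X * q j = C ((j : ℚ) + 1) * q (j + 1) + C ((n : ℚ) - (j : ℚ) + 1) * q (j - 1)) :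
    ∀ j ≤ n, C (j ! : ℚ) * q j = pathMatchingPoly (fun u => ((n : ℚ) - u) * (u + 1)) j
  | 0, _ => by simp [hq0, pathMatchingPoly]
  | 1, _ => by simp [hq1, pathMatchingPoly]
  | j + 2, hj => by
    have h := hrec (j + 1) (by omega) (by omega)
    rw [pathMatchingPoly, ← factorial_mul_eq_pathMatchingPoly n q hq0 hq1 hrec (j + 1) (by omega),
      ← factorial_mul_eq_pathMatchingPoly n q hq0 hq1 hrec j (by omega)]
    simp only [Nat.factorial_succ, Nat.add_sub_cancel, Nat.cast_mul, map_mul, map_natCast,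
      map_add, map_sub, map_one] at h ⊢
    push_cast at h ⊢
    linear_combination -((j : ℚ[X]) + 1) * (j ! : ℚ[X]) * h

theorem coeff_q_eq (n : ℕ) (q : ℕ → Polynomial ℚ)
    (hq0 : q 0 = 1) (hq1 : q 1 = Polynomial.X)
    (hrec : ∀ j : ℕ, 1 ≤ j → j ≤ n - 1 →
      Polynomial.X * q j =
        Polynomial.C ((j : ℚ) + 1) * q (j + 1) +
        Polynomial.C ((n : ℚ) - (j : ℚ) + 1) * q (j - 1))
    (i j : ℕ) (hij : i ≤ j) (hjn : j ≤ n) :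
    (Odd i → (q j).coeff (j - i) = 0) ∧
    (Even i → (q j).coeff (j - i) =
      (-1 : ℚ) ^ (i / 2) / (j.factorial : ℚ) *
        ∑ I ∈ (Finset.range (j - 1)).powerset.filter
            (fun I => I.card = i / 2 ∧ ∀ u ∈ I, ∀ w ∈ I, u < w → u + 2 ≤ w),
          ∏ u ∈ I, (((n : ℚ) - (u : ℚ)) * ((u : ℚ) + 1))) := by
  have hfact : (j ! : ℚ) ≠ 0 := by positivity
  have hcoeff : (q j).coeff (j - i) =
      (pathMatchingPoly (fun u => ((n : ℚ) - u) * (u + 1)) j).coeff (j - i) / j ! := by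
    rw [← factorial_mul_eq_pathMatchingPoly n q hq0 hq1 hrec j hjn, coeff_C_mul]
    field_simp
  refine ⟨fun hi => by rw [hcoeff, coeff_pathMatchingPoly_sub_of_odd _ hij hi, zero_div], ?_⟩
  rintro ⟨k, rfl⟩
  rw [hcoeff, ← two_mul, coeff_pathMatchingPoly_sub_two_mul _ (two_mul k ▸ hij),
    Nat.mul_div_cancel_left k two_pos, pathMatchings, filter_filter]
  simp only [and_comm]
  ring
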